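/- arXiv:2002.00794 — 4 statements merged into one kernel-verified Lean document; each statement's English description precedes it below -/
import Mathlib

section
/- Let A be a ternary Jordan algebra over a field F with char F ≠ 2, 3, and write [f,g] = f∘g − g∘f. Then: (1) [Der(A), Γ(A)] ⊆ Γ(A); (2) [QDer(A), QΓ(A)] ⊆ QΓ(A); (3) [QΓ(A), QΓ(A)] ⊆ QDer(A); (4) Γ(A) ⊆ QDer(A); (5) QΓ(A) ⊆ GDer(A); (6) Γ(A)∘Der(A) ⊆ Der(A) (the composition f∘g of f ∈ Γ(A) and g ∈ Der(A) is a derivation); (7) Γ(A) ⊆ QDer(A) ∩ QΓ(A). -/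
/-- A ternary Jordan algebra structure: a totally symmetric trilinear multiplication
`t` on a vector space such that every commutator of right multiplication operators
is a derivation. -/
structure IsTernaryJordan (F : Type*) [Field F] {A : Type*} [AddCommGroup A]
    [Module F A] (t : A → A → A → A) : Prop where
  add_left : ∀ x y z w : A, t (x + y) z w = t x z w + t y z w
  smul_left : ∀ (c : F) (x y z : A), t (c • x) y z = c • t x y z
  symm12 : ∀ x y z : A, t x y z = t y x z
  symm23 : ∀ x y z : A, t x y z = t x z y
  comm_der : ∀ x₂ x₃ y₂ y₃ a b c : A,
    t (t (t a b c) x₂ x₃) y₂ y₃ - t (t (t a b c) y₂ y₃) x₂ x₃ =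
      t (t (t a x₂ x₃) y₂ y₃ - t (t a y₂ y₃) x₂ x₃) b c +
        t a (t (t b x₂ x₃) y₂ y₃ - t (t b y₂ y₃) x₂ x₃) c +
          t a b (t (t c x₂ x₃) y₂ y₃ - t (t c y₂ y₃) x₂ x₃)
/-- A derivation of the ternary algebra `(A, t)`. -/
def IsTDer (F : Type*) [Field F] {A : Type*} [AddCommGroup A] [Module F A]
    (t : A → A → A → A) (D : A →ₗ[F] A) : Prop :=
  ∀ x y z : A, D (t x y z) = t (D x) y z + t x (D y) z + t x y (D z)
/-- A generalized derivation of the ternary algebra `(A, t)`. -/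
def IsGDer (F : Type*) [Field F] {A : Type*} [AddCommGroup A] [Module F A]
    (t : A → A → A → A) (f₁ : A →ₗ[F] A) : Prop :=
  ∃ f₂ f₃ f' : A →ₗ[F] A, ∀ x y z : A,
    t (f₁ x) y z + t x (f₂ y) z + t x y (f₃ z) = f' (t x y z)
/-- A quasiderivation of the ternary algebra `(A, t)`. -/
def IsQDer (F : Type*) [Field F] {A : Type*} [AddCommGroup A] [Module F A]
    (t : A → A → A → A) (f : A →ₗ[F] A) : Prop :=
  ∃ f' : A →ₗ[F] A, ∀ x y z : A,
    t (f x) y z + t x (f y) z + t x y (f z) = f' (t x y z)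
/-- Membership in the centroid of the ternary algebra `(A, t)`. -/
def IsCent (F : Type*) [Field F] {A : Type*} [AddCommGroup A] [Module F A]
    (t : A → A → A → A) (f : A →ₗ[F] A) : Prop :=
  ∀ x y z : A, t (f x) y z = t x (f y) z ∧ t x (f y) z = t x y (f z) ∧
    t x y (f z) = f (t x y z)
/-- Membership in the quasicentroid of the ternary algebra `(A, t)`. -/
def IsQCent (F : Type*) [Field F] {A : Type*} [AddCommGroup A] [Module F A]
    (t : A → A → A → A) (f : A →ₗ[F] A) : Prop :=
  ∀ x y z : A, t (f x) y z = t x (f y) z ∧ t x (f y) z = t x y (f z)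

/-!
Total symmetry of the product lets a condition on the first slot propagate to the other
two, so each inclusion reduces to a short computation in the first slot. For
`[QΓ(A), QΓ(A)] ⊆ QDer(A)` one shows more: the product of any element with `[f, g]` in any
slot vanishes, so `f' = 0` works.
-/

namespace IsTernaryJordan

variable {F : Type*} [Field F] {A : Type*} [AddCommGroup A] [Module F A]
  {t : A → A → A → A} (ht : IsTernaryJordan F t)
include ht

theorem rotate (x y z : A) : t x y z = t y z x :=
  (ht.symm12 x y z).trans (ht.symm23 y x z)

theorem sub_left (a b y z : A) : t (a - b) y z = t a y z - t b y z :=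
  map_sub (AddMonoidHom.mk' (t · y z) fun a b => ht.add_left a b y z) a b

theorem sub_middle (x a b z : A) : t x (a - b) z = t x a z - t x b z := by
  rw [ht.symm12, ht.sub_left, ht.symm12 a, ht.symm12 b]

theorem zero_left (y z : A) : t 0 y z = 0 := by
  simpa using ht.sub_left 0 0 y z

theorem zero_right (x y : A) : t x y 0 = 0 := by
  rw [← ht.rotate, ht.zero_left]

theorem neg_middle (x y z : A) : t x (-y) z = -t x y z := by
  rw [← zero_sub, ht.sub_middle, ht.symm12 x 0, ht.zero_left, zero_sub]

end IsTernaryJordan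

section Inclusions

variable {F : Type*} [Field F] {A : Type*} [AddCommGroup A] [Module F A]
  {t : A → A → A → A} {f g : A →ₗ[F] A}

theorem IsCent.left (hf : IsCent F t f) (x y z : A) : t (f x) y z = f (t x y z) :=
  (hf x y z).1.trans ((hf x y z).2.1.trans (hf x y z).2.2)

theorem IsCent.middle (hf : IsCent F t f) (x y z : A) : t x (f y) z = f (t x y z) :=
  (hf x y z).2.1.trans (hf x y z).2.2

theorem IsCent.right (hf : IsCent F t f) (x y z : A) : t x y (f z) = f (t x y z) :=
  (hf x y z).2.2

theorem IsCent.of_left (ht : IsTernaryJordan F t)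
    (h : ∀ x y z, t (f x) y z = f (t x y z)) : IsCent F t f := by
  intro x y z
  have hmiddle : t x (f y) z = f (t x y z) := by
    rw [ht.symm12, h, ht.symm12 y]
  have hright : t x y (f z) = f (t x y z) := by
    rw [← ht.rotate, h, ht.rotate z]
  exact ⟨(h x y z).trans hmiddle.symm, hmiddle.trans hright.symm, hright⟩

theorem IsQCent.of_left (ht : IsTernaryJordan F t)
    (h : ∀ x y z, t (f x) y z = t x (f y) z) : IsQCent F t f := by
  intro x y z
  refine ⟨h x y z, ?_⟩
  rw [← ht.rotate (f z), h, ht.rotate z, h]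

theorem IsCent.isQCent (hf : IsCent F t f) : IsQCent F t f :=
  fun x y z => ⟨(hf x y z).1, (hf x y z).2.1⟩

theorem IsCent.isQDer (hf : IsCent F t f) : IsQDer F t f :=
  ⟨f + f + f, fun x y z => by
    simp only [LinearMap.add_apply, hf.left, hf.middle, hf.right]⟩

theorem IsQCent.isGDer (ht : IsTernaryJordan F t) (hf : IsQCent F t f) : IsGDer F t f :=
  ⟨-f, 0, 0, fun x y z => by
    simp only [LinearMap.neg_apply, LinearMap.zero_apply, ht.neg_middle, ht.zero_right,
      (hf x y z).1, add_neg_cancel, add_zero]⟩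

theorem IsCent.comp_isTDer (hf : IsCent F t f) (hg : IsTDer F t g) :
    IsTDer F t (f ∘ₗ g) := by
  intro x y z
  simp only [LinearMap.comp_apply, hg x y z, map_add, hf.left, hf.middle, hf.right]

theorem IsTDer.lie_isCent (ht : IsTernaryJordan F t) (hf : IsTDer F t f)
    (hg : IsCent F t g) : IsCent F t (f ∘ₗ g - g ∘ₗ f) := by
  refine IsCent.of_left ht fun x y z => ?_
  have hfg : f (g (t x y z)) = t (f (g x)) y z + g (t x (f y) z) + g (t x y (f z)) := by
    rw [← hg.left, hf, hg.left x (f y), hg.left x y (f z)]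
  have hgf : g (f (t x y z)) = g (t (f x) y z) + g (t x (f y) z) + g (t x y (f z)) := by
    rw [hf, map_add, map_add]
  simp only [LinearMap.sub_apply, LinearMap.comp_apply, ht.sub_left, hfg, hgf, hg.left]
  abel

theorem IsQDer.lie_isQCent (ht : IsTernaryJordan F t) (hf : IsQDer F t f)
    (hg : IsQCent F t g) : IsQCent F t (f ∘ₗ g - g ∘ₗ f) := by
  obtain ⟨f', hf'⟩ := hf
  have hg₁ : ∀ a b c, t (g a) b c = t a (g b) c := fun a b c => (hg a b c).1
  refine IsQCent.of_left ht fun x y z => ?_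
  -- Expand `f' (t (g x) y z) = f' (t x (g y) z)` by the quasiderivation identity.
  have hexpand : t (f (g x)) y z + t (g x) (f y) z + t x (g y) (f z) =
      t (f x) (g y) z + t x (f (g y)) z + t x (g y) (f z) := by
    rw [← hg₁ x y (f z), hf', hg₁ x y z, ← hf' x (g y) z, hg₁ x y (f z)]
  simp only [LinearMap.sub_apply, LinearMap.comp_apply, ht.sub_left, ht.sub_middle,
    hg₁ (f x), ← hg₁ x (f y)]
  rw [sub_eq_sub_iff_add_eq_add, add_right_cancel hexpand, add_comm]

theorem IsQCent.lie_left_eq_zero (ht : IsTernaryJordan F t) (hf : IsQCent F t f)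
    (hg : IsQCent F t g) (a b c : A) : t ((f ∘ₗ g - g ∘ₗ f) a) b c = 0 := by
  have hf₁₃ : ∀ a b c, t (f a) b c = t a b (f c) := fun a b c =>
    (hf a b c).1.trans (hf a b c).2
  have hg₁ : ∀ a b c, t (g a) b c = t a (g b) c := fun a b c => (hg a b c).1
  rw [LinearMap.sub_apply, ht.sub_left, LinearMap.comp_apply, LinearMap.comp_apply,
    hf₁₃, hg₁, hg₁, hf₁₃, sub_self]

theorem IsQCent.lie_isQDer (ht : IsTernaryJordan F t) (hf : IsQCent F t f)
    (hg : IsQCent F t g) : IsQDer F t (f ∘ₗ g - g ∘ₗ f) :=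
  ⟨0, fun x y z => by
    rw [hf.lie_left_eq_zero ht hg, ht.symm12, hf.lie_left_eq_zero ht hg, ← ht.rotate,
      hf.lie_left_eq_zero ht hg, LinearMap.zero_apply, add_zero, add_zero]⟩

end Inclusions

theorem stmt7_general {F : Type*} [Field F] {A : Type*} [AddCommGroup A] [Module F A]
    (t : A → A → A → A) (ht : IsTernaryJordan F t) :
    (∀ f g : A →ₗ[F] A, IsTDer F t f → IsCent F t g →
      IsCent F t (f ∘ₗ g - g ∘ₗ f)) ∧
    (∀ f g : A →ₗ[F] A, IsQDer F t f → IsQCent F t g →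
      IsQCent F t (f ∘ₗ g - g ∘ₗ f)) ∧
    (∀ f g : A →ₗ[F] A, IsQCent F t f → IsQCent F t g →
      IsQDer F t (f ∘ₗ g - g ∘ₗ f)) ∧
    (∀ f : A →ₗ[F] A, IsCent F t f → IsQDer F t f) ∧
    (∀ f : A →ₗ[F] A, IsQCent F t f → IsGDer F t f) ∧
    (∀ f g : A →ₗ[F] A, IsCent F t f → IsTDer F t g → IsTDer F t (f ∘ₗ g)) ∧
    (∀ f : A →ₗ[F] A, IsCent F t f → IsQDer F t f ∧ IsQCent F t f) :=
  ⟨fun _ _ hf hg => hf.lie_isCent ht hg,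
    fun _ _ hf hg => hf.lie_isQCent ht hg,
    fun _ _ hf hg => hf.lie_isQDer ht hg,
    fun _ hf => hf.isQDer,
    fun _ hf => hf.isGDer ht,
    fun _ _ hf hg => hf.comp_isTDer hg,
    fun _ hf => ⟨hf.isQDer, hf.isQCent⟩⟩

/-- elementary inclusions between `Der(A)`, `GDer(A)`, `QDer(A)`,
`Γ(A)` and `QΓ(A)`. -/
theorem stmt7 {F : Type*} [Field F] {A : Type*} [AddCommGroup A] [Module F A]
    (h2 : (2 : F) ≠ 0) (h3 : (3 : F) ≠ 0)
    (t : A → A → A → A) (ht : IsTernaryJordan F t) :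
    (∀ f g : A →ₗ[F] A, IsTDer F t f → IsCent F t g →
      IsCent F t (f ∘ₗ g - g ∘ₗ f)) ∧
    (∀ f g : A →ₗ[F] A, IsQDer F t f → IsQCent F t g →
      IsQCent F t (f ∘ₗ g - g ∘ₗ f)) ∧
    (∀ f g : A →ₗ[F] A, IsQCent F t f → IsQCent F t g →
      IsQDer F t (f ∘ₗ g - g ∘ₗ f)) ∧
    (∀ f : A →ₗ[F] A, IsCent F t f → IsQDer F t f) ∧
    (∀ f : A →ₗ[F] A, IsQCent F t f → IsGDer F t f) ∧
    (∀ f g : A →ₗ[F] A, IsCent F t f → IsTDer F t g → IsTDer F t (f ∘ₗ g)) ∧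
    (∀ f : A →ₗ[F] A, IsCent F t f → IsQDer F t f ∧ IsQCent F t f) :=
  stmt7_general t ht
end

section
/- Let A be a ternary Jordan algebra over a field F with char F ≠ 2, 3. Then the quasicentroid QΓ(A) is closed under the anticommutator product f • g = f∘g + g∘f, and (QΓ(A), •) is a Jordan algebra: • is commutative and satisfies the Jordan identity (f•f)•(g•f) = ((f•f)•g)•f for all f, g ∈ QΓ(A). -/
/-- The anticommutator product on linear endomorphisms. -/
def jmul {F : Type*} [Field F] {A : Type*} [AddCommGroup A] [Module F A]
    (f g : A →ₗ[F] A) : A →ₗ[F] A :=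
  f ∘ₗ g + g ∘ₗ f

namespace IsTernaryJordan

variable {F : Type*} [Field F] {A : Type*} [AddCommGroup A] [Module F A] {t : A → A → A → A}

theorem add_mid (ht : IsTernaryJordan F t) (x y z w : A) :
    t x (y + z) w = t x y w + t x z w := by
  rw [ht.symm12, ht.add_left, ht.symm12 y, ht.symm12 z]

theorem add_right (ht : IsTernaryJordan F t) (x y z w : A) :
    t x y (z + w) = t x y z + t x y w := by
  rw [ht.symm23 x y, ht.add_mid, ht.symm23 x z, ht.symm23 x w]

end IsTernaryJordan

section jmul

variable {F : Type*} [Field F] {A : Type*} [AddCommGroup A] [Module F A]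

theorem jmul_eq (f g : A →ₗ[F] A) : jmul f g = f * g + g * f := rfl

theorem jmul_comm (f g : A →ₗ[F] A) : jmul f g = jmul g f := add_comm _ _

theorem jmul_jordan (f g : A →ₗ[F] A) :
    jmul (jmul f f) (jmul g f) = jmul (jmul (jmul f f) g) f := by
  simp only [jmul_eq]
  noncomm_ring

end jmul

namespace IsQCent

variable {F : Type*} [Field F] {A : Type*} [AddCommGroup A] [Module F A] {t : A → A → A → A}
  {f g : A →ₗ[F] A}

theorem comp_apply_left (hf : IsQCent F t f) (hg : IsQCent F t g) (x y z : A) :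
    t (f (g x)) y z = t x (g (f y)) z :=
  (hf (g x) y z).1.trans (hg x (f y) z).1

theorem comp_apply_mid (hf : IsQCent F t f) (hg : IsQCent F t g) (x y z : A) :
    t x (f (g y)) z = t x y (g (f z)) :=
  (hf x (g y) z).2.trans (hg x y (f z)).2

theorem jmul (ht : IsTernaryJordan F t) (hf : IsQCent F t f) (hg : IsQCent F t g) :
    IsQCent F t (_root_.jmul f g) := by
  intro x y z
  simp only [_root_.jmul, LinearMap.add_apply, LinearMap.comp_apply]
  constructor
  · rw [ht.add_left, ht.add_mid, hf.comp_apply_left hg, hg.comp_apply_left hf, add_comm]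
  · rw [ht.add_mid, ht.add_right, hf.comp_apply_mid hg, hg.comp_apply_mid hf, add_comm]

end IsQCent

theorem stmt13_general {F : Type*} [Field F] {A : Type*} [AddCommGroup A] [Module F A]
    (t : A → A → A → A) (ht : IsTernaryJordan F t) :
    (∀ f g : A →ₗ[F] A, IsQCent F t f → IsQCent F t g → IsQCent F t (jmul f g)) ∧
    (∀ f g : A →ₗ[F] A, IsQCent F t f → IsQCent F t g → jmul f g = jmul g f) ∧
    (∀ f g : A →ₗ[F] A, IsQCent F t f → IsQCent F t g →
      jmul (jmul f f) (jmul g f) = jmul (jmul (jmul f f) g) f) :=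
  ⟨fun _ _ hf hg => hf.jmul ht hg, fun f g _ _ => jmul_comm f g, fun f g _ _ => jmul_jordan f g⟩

/-- the quasicentroid is closed under the anticommutator
`f • g = fg + gf`, and `(QΓ(A), •)` is a Jordan algebra. -/
theorem stmt13 {F : Type*} [Field F] {A : Type*} [AddCommGroup A] [Module F A]
    (h2 : (2 : F) ≠ 0) (h3 : (3 : F) ≠ 0)
    (t : A → A → A → A) (ht : IsTernaryJordan F t) :
    (∀ f g : A →ₗ[F] A, IsQCent F t f → IsQCent F t g → IsQCent F t (jmul f g)) ∧
    (∀ f g : A →ₗ[F] A, IsQCent F t f → IsQCent F t g → jmul f g = jmul g f) ∧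
    (∀ f g : A →ₗ[F] A, IsQCent F t f → IsQCent F t g →
      jmul (jmul f f) (jmul g f) = jmul (jmul (jmul f f) g) f) :=
  stmt13_general t ht
end

section
/- Let A be a finite-dimensional ternary Jordan algebra over a field F with char F ≠ 2 such that the multiplication is nonzero (there exist x,y,z ∈ A with [[x,y,z]] ≠ 0) and every linear endomorphism of A is a quasiderivation (QDer(A) = gl(A)). Then dim A ≤ 2. Moreover: (1) if dim A = 1, then A is a simple ternary Jordan algebra; (2) if dim A = 2, then the span of {[[x,y,z]] : x,y,z ∈ A} equals A. -/
open Module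

structure IsSymmTrilinear (R : Type*) [Semiring R] {A : Type*} [AddCommMonoid A] [Module R A]
    (t : A → A → A → A) : Prop where
  add_left : ∀ x y z w : A, t (x + y) z w = t x z w + t y z w
  smul_left : ∀ (c : R) (x y z : A), t (c • x) y z = c • t x y z
  symm12 : ∀ x y z : A, t x y z = t y x z
  symm23 : ∀ x y z : A, t x y z = t x z y

theorem IsTernaryJordan.isSymmTrilinear {F : Type*} [Field F] {A : Type*} [AddCommGroup A]
    [Module F A] {t : A → A → A → A} (ht : IsTernaryJordan F t) : IsSymmTrilinear F t :=
  ⟨ht.add_left, ht.smul_left, ht.symm12, ht.symm23⟩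

theorem Submodule.finrank_map_eq_of_disjoint_ker {K V W : Type*} [DivisionRing K]
    [AddCommGroup V] [Module K V] [AddCommGroup W] [Module K W] {f : V →ₗ[K] W}
    {p : Submodule K V} (hf : Disjoint p (LinearMap.ker f)) :
    finrank K (p.map f) = finrank K p := by
  have hinj : Function.Injective (f ∘ₗ p.subtype) := by
    rw [← LinearMap.ker_eq_bot, LinearMap.ker_comp, ← Submodule.disjoint_iff_comap_eq_bot]
    exact hf
  rw [← LinearMap.finrank_range_of_inj hinj, LinearMap.range_comp, Submodule.range_subtype]

namespace IsSymmTrilinear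

section Semiring

variable {R : Type*} [Semiring R] {A : Type*} [AddCommMonoid A] [Module R A]
  {t : A → A → A → A}

theorem symm13 (ht : IsSymmTrilinear R t) (x y z : A) : t x y z = t z y x := by
  rw [ht.symm12, ht.symm23, ht.symm12]

theorem add_right (ht : IsSymmTrilinear R t) (x y z w : A) :
    t x y (z + w) = t x y z + t x y w := by
  rw [ht.symm13, ht.add_left, ht.symm13 z, ht.symm13 w]

theorem smul_mid (ht : IsSymmTrilinear R t) (c : R) (x y z : A) :
    t x (c • y) z = c • t x y z := by
  rw [ht.symm12, ht.smul_left, ht.symm12]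

theorem smul_right (ht : IsSymmTrilinear R t) (c : R) (x y z : A) :
    t x y (c • z) = c • t x y z := by
  rw [ht.symm13, ht.smul_left, ht.symm13]

def rmul (ht : IsSymmTrilinear R t) (x y : A) : A →ₗ[R] A where
  toFun := t x y
  map_add' := ht.add_right x y
  map_smul' c := ht.smul_right c x y

@[simp]
theorem rmul_apply (ht : IsSymmTrilinear R t) (x y z : A) : ht.rmul x y z = t x y z :=
  rfl

end Semiring

variable {F : Type*} [Field F] {A : Type*} [AddCommGroup A] [Module F A]
  {t : A → A → A → A}

theorem exists_linearMap_of_isQDer_smulRight (ht : IsSymmTrilinear F t) {φ : Dual F A} {u : A}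
    (hD : IsQDer F t (φ.smulRight u)) :
    ∃ g : A →ₗ[F] A, ∀ x y z : A,
      φ x • t u y z + φ y • t u x z + φ z • t u x y = g (t x y z) := by
  obtain ⟨g, hg⟩ := hD
  refine ⟨g, fun x y z => ?_⟩
  have h := hg x y z
  simp only [LinearMap.smulRight_apply, ht.smul_left, ht.smul_mid, ht.smul_right] at h
  rwa [ht.symm12 x u z, ht.symm13 x y u, ht.symm23 u y x] at h

theorem smul_add_smul_add_smul_eq_zero (ht : IsSymmTrilinear F t)
    (hq : ∀ D : A →ₗ[F] A, IsQDer F t D) (φ : Dual F A) (u : A) {x y z : A}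
    (h : t x y z = 0) : φ x • t u y z + φ y • t u x z + φ z • t u x y = 0 := by
  obtain ⟨g, hg⟩ := ht.exists_linearMap_of_isQDer_smulRight (hq (φ.smulRight u))
  rw [hg, h, map_zero]

theorem apply_eq_zero_of_forall_right (ht : IsSymmTrilinear F t)
    (hq : ∀ D : A →ₗ[F] A, IsQDer F t D) {z : A} (hz : z ≠ 0) (h : ∀ u v, t u v z = 0)
    (a b c : A) : t a b c = 0 := by
  obtain ⟨φ, hφ⟩ := Projective.exists_dual_eq_one F hz
  have hzbc : t z b c = 0 := by rw [ht.symm13]; exact h c b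
  have := ht.smul_add_smul_add_smul_eq_zero hq φ a hzbc
  rwa [hφ, one_smul, ht.symm23 a z c, h, ht.symm23 a z b, h, smul_zero, smul_zero,
    add_zero, add_zero] at this

theorem apply_eq_zero_of_forall_self_self (ht : IsSymmTrilinear F t)
    (hq : ∀ D : A →ₗ[F] A, IsQDer F t D) (h2 : (2 : F) ≠ 0) {z : A} (hz : z ≠ 0)
    (h : ∀ w, t w z z = 0) (a b c : A) : t a b c = 0 := by
  obtain ⟨γ, hγ⟩ := Projective.exists_dual_eq_one F hz
  refine ht.apply_eq_zero_of_forall_right hq hz (fun u w => ?_) a b c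
  have := ht.smul_add_smul_add_smul_eq_zero hq γ u (h w)
  rw [h u, smul_zero, zero_add, hγ, one_smul, ← two_smul F] at this
  exact (smul_eq_zero.mp this).resolve_left h2

theorem apply_eq_zero_of_forall_left (ht : IsSymmTrilinear F t)
    (hq : ∀ D : A →ₗ[F] A, IsQDer F t D) (h2 : (2 : F) ≠ 0) {y z : A} (hy : y ≠ 0)
    (hz : z ≠ 0) (h : ∀ w, t w y z = 0) (a b c : A) : t a b c = 0 := by
  obtain ⟨β, hβ⟩ := Projective.exists_dual_eq_one F hy
  refine ht.apply_eq_zero_of_forall_self_self hq h2 hz (fun u => ?_) a b c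
  -- expand the vanishing product `[[z,y,z]]` against `β ⊗ u`
  have := ht.smul_add_smul_add_smul_eq_zero hq β u (h z)
  rwa [h u, ht.symm23 u z y, h u, smul_zero, zero_add, add_zero, hβ, one_smul] at this

theorem apply_ne_zero (ht : IsSymmTrilinear F t) (hq : ∀ D : A →ₗ[F] A, IsQDer F t D)
    (h2 : (2 : F) ≠ 0) (hnz : ∃ x y z : A, t x y z ≠ 0) (α : Dual F A) {x y z : A}
    (hx : α x ≠ 0) (hαy : α y = 0) (hαz : α z = 0) (hy : y ≠ 0) (hz : z ≠ 0) :
    t x y z ≠ 0 := by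
  intro h0
  obtain ⟨a, b, c, habc⟩ := hnz
  refine habc (ht.apply_eq_zero_of_forall_left hq h2 hy hz (fun u => ?_) a b c)
  have := ht.smul_add_smul_add_smul_eq_zero hq α u h0
  rw [hαy, hαz, zero_smul, zero_smul, add_zero, add_zero] at this
  exact (smul_eq_zero.mp this).resolve_left hx

theorem apply_self_self_ne_zero (ht : IsSymmTrilinear F t)
    (hq : ∀ D : A →ₗ[F] A, IsQDer F t D) (h2 : (2 : F) ≠ 0) (hnz : ∃ x y z : A, t x y z ≠ 0)
    (α : Dual F A) {x y : A} (hx : α x ≠ 0) (hαy : α y = 0) (hy : y ≠ 0) :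
    t x x y ≠ 0 := by
  intro h0
  have hx0 : x ≠ 0 := by rintro rfl; exact hx (map_zero α)
  obtain ⟨a, b, c, habc⟩ := hnz
  refine habc (ht.apply_eq_zero_of_forall_left hq h2 hx0 hy (fun u => ?_) a b c)
  have := ht.smul_add_smul_add_smul_eq_zero hq α u h0
  rw [hαy, zero_smul, add_zero, ← two_smul F, smul_smul] at this
  exact (smul_eq_zero.mp this).resolve_left (mul_ne_zero h2 hx)

theorem two_mul_finrank_ker_le_finrank_span [FiniteDimensional F A]
    (ht : IsSymmTrilinear F t) (hq : ∀ D : A →ₗ[F] A, IsQDer F t D) (h2 : (2 : F) ≠ 0)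
    (hnz : ∃ x y z : A, t x y z ≠ 0) {φ : Dual F A} {e y : A} (he : φ e = 1)
    (hyK : y ∈ LinearMap.ker φ) (hy : y ≠ 0) :
    2 * finrank F (LinearMap.ker φ) ≤
      finrank F (Submodule.span F {w : A | ∃ x y z : A, w = t x y z}) := by
  obtain ⟨g, hg⟩ := ht.exists_linearMap_of_isQDer_smulRight (hq (φ.smulRight e))
  set V₂ := (LinearMap.ker φ).map (ht.rmul e e)
  set V₁ := (LinearMap.ker φ).map (ht.rmul e y)
  have hV₂ : V₂ ≤ Module.End.eigenspace g 2 := Submodule.map_le_iff_le_comap.2 fun z hz => by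
    rw [Submodule.mem_comap, Module.End.mem_eigenspace_iff, rmul_apply, ← hg, he,
      LinearMap.mem_ker.1 hz, two_smul]
    simp
  have hV₁ : V₁ ≤ Module.End.eigenspace g 1 := Submodule.map_le_iff_le_comap.2 fun z hz => by
    rw [Submodule.mem_comap, Module.End.mem_eigenspace_iff, rmul_apply, ← hg, he,
      LinearMap.mem_ker.1 hz, LinearMap.mem_ker.1 hyK]
    simp
  have h21 : (2 : F) ≠ 1 := fun h => one_ne_zero (by linear_combination h)
  have hdisj : Disjoint V₂ V₁ :=
    ((Module.End.eigenspaces_iSupIndep g).pairwiseDisjoint h21).mono hV₂ hV₁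
  have he0 : φ e ≠ 0 := by rw [he]; exact one_ne_zero
  have hfin₂ : finrank F V₂ = finrank F (LinearMap.ker φ) :=
    Submodule.finrank_map_eq_of_disjoint_ker <| LinearMap.disjoint_ker.2 fun z hzK h0 => by
      by_contra hz
      exact ht.apply_self_self_ne_zero hq h2 hnz φ he0 (LinearMap.mem_ker.1 hzK) hz h0
  have hfin₁ : finrank F V₁ = finrank F (LinearMap.ker φ) :=
    Submodule.finrank_map_eq_of_disjoint_ker <| LinearMap.disjoint_ker.2 fun z hzK h0 => by
      by_contra hz
      exact ht.apply_ne_zero hq h2 hnz φ he0 (LinearMap.mem_ker.1 hyK)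
        (LinearMap.mem_ker.1 hzK) hy hz h0
  have hsup : V₂ ⊔ V₁ ≤ Submodule.span F {w : A | ∃ x y z : A, w = t x y z} := sup_le
    (Submodule.map_le_iff_le_comap.2 fun z _ => Submodule.subset_span ⟨e, e, z, rfl⟩)
    (Submodule.map_le_iff_le_comap.2 fun z _ => Submodule.subset_span ⟨e, y, z, rfl⟩)
  have hdim := Submodule.finrank_sup_add_finrank_inf_eq V₂ V₁
  rw [hdisj.eq_bot, finrank_bot, hfin₂, hfin₁] at hdim
  have := Submodule.finrank_mono hsup
  omega

theorem two_mul_finrank_sub_one_le_finrank_span [FiniteDimensional F A]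
    (ht : IsSymmTrilinear F t) (hq : ∀ D : A →ₗ[F] A, IsQDer F t D) (h2 : (2 : F) ≠ 0)
    (hnz : ∃ x y z : A, t x y z ≠ 0) :
    2 * (finrank F A - 1) ≤
      finrank F (Submodule.span F {w : A | ∃ x y z : A, w = t x y z}) := by
  obtain hn | hn := lt_or_ge (finrank F A) 2
  · omega
  have : Nontrivial A := (finrank_pos_iff (R := F)).mp (by omega)
  obtain ⟨e, he0⟩ := exists_ne (0 : A)
  obtain ⟨φ, he⟩ := Projective.exists_dual_eq_one F he0
  have hK := φ.finrank_ker_add_one_of_ne_zero fun hφ => by simp [hφ] at he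
  obtain ⟨y, hyK, hy⟩ : ∃ y ∈ LinearMap.ker φ, y ≠ 0 :=
    Submodule.exists_mem_ne_zero_of_ne_bot fun hK0 => by rw [hK0, finrank_bot] at hK; omega
  have := ht.two_mul_finrank_ker_le_finrank_span hq h2 hnz he hyK hy
  omega

end IsSymmTrilinear

/-- if the multiplication of a finite-dimensional ternary Jordan
algebra is nonzero and every linear endomorphism is a quasiderivation, then
`dim A ≤ 2`; if `dim A = 1` then `A` is simple, and if `dim A = 2` then
`[[A,A,A]] = A`. -/
theorem stmt15 {F : Type*} [Field F] {A : Type*} [AddCommGroup A] [Module F A]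
    [FiniteDimensional F A] (h2 : (2 : F) ≠ 0)
    (t : A → A → A → A) (ht : IsTernaryJordan F t)
    (hnz : ∃ x y z : A, t x y z ≠ 0)
    (hq : ∀ D : A →ₗ[F] A, IsQDer F t D) :
    Module.finrank F A ≤ 2 ∧
      (Module.finrank F A = 1 →
        (∃ x y z : A, t x y z ≠ 0) ∧
          ∀ I : Submodule F A, (∀ a ∈ I, ∀ x y : A, t a x y ∈ I) →
            I = ⊥ ∨ I = ⊤) ∧
      (Module.finrank F A = 2 →
        Submodule.span F {w : A | ∃ x y z : A, w = t x y z} = ⊤) := by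
  have hspan := ht.isSymmTrilinear.two_mul_finrank_sub_one_le_finrank_span hq h2 hnz
  have hle := Submodule.finrank_le (Submodule.span F {w : A | ∃ x y z : A, w = t x y z})
  refine ⟨by omega, fun h1 => ⟨hnz, fun I _ => ?_⟩,
    fun h2 => Submodule.eq_top_of_finrank_eq (by omega)⟩
  have : IsSimpleModule F A := isSimpleModule_iff_finrank_eq_one.2 h1
  exact eq_bot_or_eq_top I
end

section
/- Let A be a ternary Jordan algebra over a field F and let f be an element of the centroid Γ(A). Then: (1) Ker(f) and Im(f) are ideals of A; (2) if moreover A is finite-dimensional and indecomposable, f ≠ 0, and X² does not divide the minimal polynomial of f, then f is invertible (bijective). -/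
open Polynomial

namespace Module.End

variable {K V : Type*} [Field K] [AddCommGroup V] [Module K V]

theorem exists_not_X_dvd_aeval_X_mul_eq_zero (g : Module.End K V) {p : K[X]}
    (hp : aeval g p = 0) (hX2 : ¬ X ^ 2 ∣ p) : ∃ q : K[X], ¬ X ∣ q ∧ aeval g (X * q) = 0 := by
  by_cases hX : X ∣ p
  · obtain ⟨q, rfl⟩ := hX
    exact ⟨q, fun hq ↦ hX2 (by rw [sq]; exact mul_dvd_mul_left X hq), hp⟩
  · exact ⟨p, hX, by rw [map_mul, hp, mul_zero]⟩

theorem ker_sq_le_ker_of_aeval_eq_zero (g : Module.End K V) {p : K[X]}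
    (hp : aeval g p = 0) (hX2 : ¬ X ^ 2 ∣ p) : LinearMap.ker (g ^ 2) ≤ LinearMap.ker g := by
  obtain ⟨q, hXq, hq⟩ := g.exists_not_X_dvd_aeval_X_mul_eq_zero hp hX2
  obtain ⟨a, b, hab⟩ := (prime_X.coprime_iff_not_dvd).2 hXq
  intro x hx
  rw [LinearMap.mem_ker] at hx ⊢
  have hX : (X : K[X]) = a * X ^ 2 + b * (X * q) := by linear_combination (-X) * hab
  calc g x = aeval g (X : K[X]) x := by rw [aeval_X]
    _ = aeval g (a * X ^ 2 + b * (X * q)) x := by rw [← hX]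
    _ = aeval g a ((g ^ 2) x) + aeval g b (aeval g (X * q) x) := by
      rw [map_add, map_mul (aeval g) a, map_mul (aeval g) b, aeval_X_pow]; rfl
    _ = 0 := by rw [hx, hq, map_zero, LinearMap.zero_apply, map_zero, add_zero]

theorem disjoint_ker_range_of_ker_sq_le (g : Module.End K V)
    (h : LinearMap.ker (g ^ 2) ≤ LinearMap.ker g) :
    Disjoint (LinearMap.ker g) (LinearMap.range g) := by
  rw [Submodule.disjoint_def]
  rintro _ hgx ⟨x, rfl⟩
  exact h hgx

theorem isCompl_ker_range_of_not_X_sq_dvd_minpoly [FiniteDimensional K V] (g : Module.End K V)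
    (h : ¬ X ^ 2 ∣ minpoly K g) : IsCompl (LinearMap.ker g) (LinearMap.range g) := by
  refine (Submodule.isCompl_iff_disjoint _ _ ?_).2 <|
    g.disjoint_ker_range_of_ker_sq_le <| g.ker_sq_le_ker_of_aeval_eq_zero (minpoly.aeval K g) h
  rw [add_comm, LinearMap.finrank_range_add_finrank_ker]

end Module.End

section Centroid

variable {F A : Type*} [Field F] [AddCommGroup A] [Module F A]

def IsTernaryIdeal (t : A → A → A → A) (I : Submodule F A) : Prop :=
  ∀ a ∈ I, ∀ x y : A, t a x y ∈ I

variable {t : A → A → A → A}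

theorem IsTernaryJordan.zero_left_s19 (ht : IsTernaryJordan F t) (x y : A) : t 0 x y = 0 := by
  simpa using ht.smul_left 0 0 x y

variable {f : A →ₗ[F] A}

theorem IsCent.map_apply (hf : IsCent F t f) (a x y : A) : f (t a x y) = t (f a) x y := by
  rw [(hf a x y).1, (hf a x y).2.1, (hf a x y).2.2]

theorem IsCent.isTernaryIdeal_ker (ht : IsTernaryJordan F t) (hf : IsCent F t f) :
    IsTernaryIdeal t (LinearMap.ker f) := by
  intro a ha x y
  rw [LinearMap.mem_ker] at ha ⊢
  rw [hf.map_apply, ha, ht.zero_left_s19]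

theorem IsCent.isTernaryIdeal_range (hf : IsCent F t f) : IsTernaryIdeal t (LinearMap.range f) := by
  rintro _ ⟨b, rfl⟩ x y
  exact ⟨t b x y, hf.map_apply b x y⟩

end Centroid

/-- for `f` in the centroid, `Ker f` and `Im f` are ideals; if
moreover `A` is finite-dimensional and indecomposable, `f ≠ 0` and `X²` does not
divide the minimal polynomial of `f`, then `f` is bijective. -/
theorem stmt19 {F : Type*} [Field F] {A : Type*} [AddCommGroup A] [Module F A]
    (t : A → A → A → A) (ht : IsTernaryJordan F t)
    (f : A →ₗ[F] A) (hf : IsCent F t f) :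
    ((∀ a ∈ LinearMap.ker f, ∀ x y : A, t a x y ∈ LinearMap.ker f) ∧
      ∀ a ∈ LinearMap.range f, ∀ x y : A, t a x y ∈ LinearMap.range f) ∧
    (FiniteDimensional F A →
      (¬ ∃ A₁ A₂ : Submodule F A, A₁ ≠ ⊥ ∧ A₂ ≠ ⊥ ∧
          (∀ a ∈ A₁, ∀ x y : A, t a x y ∈ A₁) ∧
          (∀ a ∈ A₂, ∀ x y : A, t a x y ∈ A₂) ∧
          A₁ ⊓ A₂ = ⊥ ∧ A₁ ⊔ A₂ = ⊤) →
      f ≠ 0 → ¬ (Polynomial.X ^ 2 ∣ minpoly F (f : Module.End F A)) →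
      Function.Bijective f) := by
  refine ⟨⟨hf.isTernaryIdeal_ker ht, hf.isTernaryIdeal_range⟩, ?_⟩
  intro _ hInd hf0 hX2
  have hcompl := Module.End.isCompl_ker_range_of_not_X_sq_dvd_minpoly (f : Module.End F A) hX2
  have hker : LinearMap.ker f = ⊥ := by
    by_contra hker
    exact hInd ⟨_, _, hker, fun h ↦ hf0 (LinearMap.range_eq_bot.mp h),
      hf.isTernaryIdeal_ker ht, hf.isTernaryIdeal_range, hcompl.inf_eq_bot, hcompl.sup_eq_top⟩
  have hinj : Function.Injective f := LinearMap.ker_eq_bot.mp hker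
  exact ⟨hinj, LinearMap.injective_iff_surjective.mp hinj⟩
end
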